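/- arXiv:1908.11460 — 2 statements merged into one kernel-verified Lean document; each statement's English description precedes it below -/
import Mathlib

section
/- Let H be a real Hilbert space, a a continuous symmetric nonnegative bilinear form, K the kernel {v : a(v,v)=0} of a, and suppose there is a constant c > 0 with c‖v‖² ≤ a(v,v) for all v orthogonal to K (Korn-type inequality). Let L ∈ H* vanish on K, let u solve a(u, v) = L(v) for all v ⊥ K with u ⊥ K, and let u_ε solve a(u_ε,v) + ε⟨u_ε,v⟩ = L(v) for all v ∈ H. Then ‖u - u_ε‖ ≤ (ε/c) ‖u_ε‖, and consequently ‖u - u_ε‖ ≤ (ε/c²) ‖L‖. -/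
open scoped RealInnerProductSpace

theorem stmt3 {H : Type*} [NormedAddCommGroup H] [InnerProductSpace ℝ H]
    (a : H →ₗ[ℝ] H →ₗ[ℝ] ℝ) (M : ℝ)
    (hbound : ∀ w v : H, |a w v| ≤ M * ‖w‖ * ‖v‖)
    (hsymm : ∀ w v : H, a w v = a v w)
    (hnonneg : ∀ v : H, 0 ≤ a v v)
    (c : ℝ) (hc : 0 < c)
    (hKorn : ∀ v : H, (∀ k : H, a k k = 0 → ⟪v, k⟫ = 0) → c * ‖v‖ ^ 2 ≤ a v v)
    (L : H →L[ℝ] ℝ) (hL : ∀ k : H, a k k = 0 → L k = 0)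
    (ε : ℝ) (hε : 0 < ε) (u uε : H)
    (hu_perp : ∀ k : H, a k k = 0 → ⟪u, k⟫ = 0)
    (hu : ∀ v : H, (∀ k : H, a k k = 0 → ⟪v, k⟫ = 0) → a u v = L v)
    (huε : ∀ v : H, a uε v + ε * ⟪uε, v⟫ = L v) :
    ‖u - uε‖ ≤ (ε / c) * ‖uε‖ ∧ ‖u - uε‖ ≤ (ε / c ^ 2) * ‖L‖ := by
  -- any w pairs to 0 with a kernel element
  have hker : ∀ k : H, a k k = 0 → ∀ w : H, a w k = 0 := by
    intro k hk w
    by_contra h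
    have key : ∀ t : ℝ, 0 ≤ a w w + 2 * t * a w k := by
      intro t
      have h1 := hnonneg (w + t • k)
      simp only [map_add, map_smul, LinearMap.add_apply, LinearMap.smul_apply,
        smul_eq_mul] at h1
      rw [hsymm k w, hk] at h1
      linarith
    have h2 : (2 : ℝ) * a w k ≠ 0 := mul_ne_zero two_ne_zero h
    have h3 := key (-(a w w + 1) / (2 * a w k))
    have h4 : 2 * (-(a w w + 1) / (2 * a w k)) * a w k = -(a w w + 1) := by
      field_simp
    rw [h4] at h3
    linarith
  -- uε is orthogonal to the kernel
  have huε_perp : ∀ k : H, a k k = 0 → ⟪uε, k⟫ = 0 := by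
    intro k hk
    have h1 := huε k
    rw [hker k hk uε, hL k hk] at h1
    have h2 : ε * ⟪uε, k⟫ = 0 := by linarith
    exact (mul_eq_zero.mp h2).resolve_left hε.ne'
  set e := u - uε with he
  have he_perp : ∀ k : H, a k k = 0 → ⟪e, k⟫ = 0 := by
    intro k hk
    rw [he, inner_sub_left, hu_perp k hk, huε_perp k hk, sub_zero]
  have haee : a e e = ε * ⟪uε, e⟫ := by
    have h1 : a e e = a u e - a uε e := by
      rw [he]
      simp only [map_sub, LinearMap.sub_apply]
      rw [hsymm uε u]
    have h2 : a u e = L e := hu e he_perp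
    have h3 := huε e
    rw [h1, h2]; linarith
  have hcs : ε * ⟪uε, e⟫ ≤ ε * (‖uε‖ * ‖e‖) :=
    mul_le_mul_of_nonneg_left (real_inner_le_norm uε e) hε.le
  have hkorn_e : c * ‖e‖ ^ 2 ≤ ε * (‖uε‖ * ‖e‖) := by
    calc c * ‖e‖ ^ 2 ≤ a e e := hKorn e he_perp
    _ = ε * ⟪uε, e⟫ := haee
    _ ≤ _ := hcs
  have hfirst : ‖e‖ ≤ (ε / c) * ‖uε‖ := by
    rcases eq_or_lt_of_le (norm_nonneg e) with h | h
    · rw [← h]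
      positivity
    · rw [div_mul_eq_mul_div, le_div_iff₀ hc]
      nlinarith [hkorn_e]
  -- bound on ‖uε‖
  have hLuε : a uε uε ≤ ‖L‖ * ‖uε‖ := by
    have h1 := huε uε
    have h2 : ⟪uε, uε⟫ = ‖uε‖ ^ 2 := real_inner_self_eq_norm_sq uε
    have h3 : L uε ≤ ‖L‖ * ‖uε‖ := by
      calc L uε ≤ |L uε| := le_abs_self _
      _ = ‖L uε‖ := rfl
      _ ≤ ‖L‖ * ‖uε‖ := L.le_opNorm uε
    nlinarith [sq_nonneg ‖uε‖]
  have huε_norm : c * ‖uε‖ ≤ ‖L‖ := by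
    have hk := hKorn uε huε_perp
    rcases eq_or_lt_of_le (norm_nonneg uε) with h | h
    · rw [← h, mul_zero]
      exact (norm_nonneg L)
    · nlinarith [hk, hLuε]
  refine ⟨hfirst, ?_⟩
  calc ‖e‖ ≤ (ε / c) * ‖uε‖ := hfirst
  _ ≤ (ε / c ^ 2) * ‖L‖ := by
      rw [div_mul_eq_mul_div, div_mul_eq_mul_div, div_le_div_iff₀ hc (by positivity)]
      nlinarith [mul_le_mul_of_nonneg_left huε_norm (mul_pos hε hc).le]
end

section
/- Let H be a real Hilbert space, a a continuous symmetric nonnegative bilinear form with finite-dimensional kernel K, satisfying the Korn inequality a(v,v) ≥ c‖v‖² for v ⊥ K. Let f ∈ H with P_K f = 0, and let u solve a(u,v) = ⟨f,v⟩ for all v ⊥ K with u ⊥ K. For ε > 0 let u_ε solve a(u_ε,v) + ε⟨u_ε,v⟩ = ⟨f,v⟩ for all v ∈ H. Then ‖u_ε‖ ≤ ‖f‖/c and ‖u − u_ε‖ ≤ ε‖f‖/c². -/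
open scoped RealInnerProductSpace

theorem stmt13 {H : Type*} [NormedAddCommGroup H] [InnerProductSpace ℝ H]
    (a : H →ₗ[ℝ] H →ₗ[ℝ] ℝ) (M : ℝ)
    (hbound : ∀ w v : H, |a w v| ≤ M * ‖w‖ * ‖v‖)
    (hsymm : ∀ w v : H, a w v = a v w)
    (hnonneg : ∀ v : H, 0 ≤ a v v)
    (K : Submodule ℝ H) (hK : (K : Set H) = {v : H | a v v = 0})
    (hfin : FiniteDimensional ℝ K)
    (c : ℝ) (hc : 0 < c)
    (hKorn : ∀ v : H, (∀ k ∈ K, ⟪v, k⟫ = 0) → c * ‖v‖ ^ 2 ≤ a v v)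
    (f : H) (hf : ∀ k ∈ K, ⟪f, k⟫ = 0)
    (ε : ℝ) (hε : 0 < ε) (u uε : H)
    (hu_perp : ∀ k ∈ K, ⟪u, k⟫ = 0)
    (hu : ∀ v : H, (∀ k ∈ K, ⟪v, k⟫ = 0) → a u v = ⟪f, v⟫)
    (huε : ∀ v : H, a uε v + ε * ⟪uε, v⟫ = ⟪f, v⟫) :
    ‖uε‖ ≤ ‖f‖ / c ∧ ‖u - uε‖ ≤ ε * ‖f‖ / c ^ 2 := by
  -- degenerate Cauchy-Schwarz for a
  have key : ∀ w k : H, a k k = 0 → a w k = 0 := by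
    intro w k hk
    by_contra h
    set t : ℝ := -(a w w + 1) / (2 * a w k) with ht
    have h2 : (0:ℝ) ≤ a (w + t • k) (w + t • k) := hnonneg _
    have hexp : a (w + t • k) (w + t • k)
        = a w w + 2 * t * a w k + t * t * a k k := by
      simp [map_add, map_smul, LinearMap.add_apply, LinearMap.smul_apply,
        smul_eq_mul]
      rw [hsymm k w]; ring
    rw [hexp, hk] at h2
    have h2aw : 2 * a w k ≠ 0 := by
      intro hh
      rcases mul_eq_zero.mp hh with h' | h'
      · norm_num at h'
      · exact h h'
    have : 2 * t * a w k = -(a w w + 1) := by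
      rw [ht]; field_simp
    rw [this] at h2
    linarith
  have hperp : ∀ k ∈ K, ⟪uε, k⟫ = 0 := by
    intro k hk
    have hkk : a k k = 0 := by
      have : k ∈ ({v : H | a v v = 0} : Set H) := hK ▸ hk
      exact this
    have h1 := huε k
    rw [key uε k hkk, hf k hk, zero_add] at h1
    have := mul_eq_zero.mp h1
    rcases this with h' | h'
    · exact absurd h' (ne_of_gt hε)
    · exact h'
  -- energy bound
  have hinner : ⟪uε, uε⟫ = ‖uε‖ ^ 2 := real_inner_self_eq_norm_sq uε
  have h1 : c * ‖uε‖ ^ 2 ≤ a uε uε := hKorn uε hperp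
  have h2 := huε uε
  have h3 : ⟪f, uε⟫ ≤ ‖f‖ * ‖uε‖ := real_inner_le_norm f uε
  have hb1 : ‖uε‖ ≤ ‖f‖ / c := by
    rw [le_div_iff₀ hc]
    rcases eq_or_lt_of_le (norm_nonneg uε) with h0 | h0
    · rw [← h0]; simp [norm_nonneg]
    · nlinarith [hε.le, sq_nonneg ‖uε‖]
  refine ⟨hb1, ?_⟩
  -- error bound
  set e := u - uε with he
  have heperp : ∀ k ∈ K, ⟪e, k⟫ = 0 := by
    intro k hk
    rw [he, inner_sub_left, hu_perp k hk, hperp k hk, sub_zero]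
  have hKe : c * ‖e‖ ^ 2 ≤ a e e := hKorn e heperp
  have haee : a e e = ε * ⟪uε, e⟫ := by
    have h4 : a u e = ⟪f, e⟫ := hu e heperp
    have h5 := huε e
    have : a e e = a u e - a uε e := by
      simp only [he, map_sub, LinearMap.sub_apply]
      rw [hsymm uε u]
    rw [this, h4]
    linarith
  have h6 : ⟪uε, e⟫ ≤ ‖uε‖ * ‖e‖ := real_inner_le_norm uε e
  have h7 : c * ‖e‖ ^ 2 ≤ ε * (‖f‖ / c) * ‖e‖ := by
    calc c * ‖e‖ ^ 2 ≤ ε * ⟪uε, e⟫ := by rw [← haee]; exact hKe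
      _ ≤ ε * (‖uε‖ * ‖e‖) := by
          exact mul_le_mul_of_nonneg_left h6 hε.le
      _ ≤ ε * (‖f‖ / c) * ‖e‖ := by
          rw [mul_assoc]
          refine mul_le_mul_of_nonneg_left ?_ hε.le
          exact mul_le_mul_of_nonneg_right hb1 (norm_nonneg e)
  rw [le_div_iff₀ (by positivity : (0:ℝ) < c ^ 2)]
  rcases eq_or_lt_of_le (norm_nonneg e) with h0 | h0
  · rw [← h0, zero_mul]; positivity
  · have h8 : c ^ 2 * ‖e‖ ^ 2 ≤ ε * ‖f‖ * ‖e‖ := by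
      have h9 := mul_le_mul_of_nonneg_left h7 hc.le
      have h10 : c * (ε * (‖f‖ / c) * ‖e‖) = ε * ‖f‖ * ‖e‖ := by
        field_simp
      rw [h10] at h9
      nlinarith [h9]
    nlinarith [h8, h0]
end
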